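/- Block closure under Hadamard product: the set 𝒞^{N,M} of MN×MN block matrices A (with M² blocks of size N×N) satisfying (i) each diagonal block A_{k,k} ∈ 𝒞^N, (ii) there exist vectors r^L, r^U ∈ (ℝ\{0})^{(M-1)N} with A_{i+1,j} = diag(r^L_i) A_{i,j} for j ≤ i and A_{i-1,j} = diag(r^U_{i-1}) A_{i,j} for i ≤ j, is closed under the Hadamard product. -/

import Mathlib

open Matrix Finset

/-- `A` is an L-CoLT matrix with ratio vector `r` (0-indexed; `r` has `N-1` meaningful
nonzero entries): `A (i+1) j = r i * A i j` for `j ≤ i`, and `A i j = 0` for `i < j`. -/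
def IsLCoLT {N : ℕ} (A : Matrix (Fin N) (Fin N) ℝ) (r : ℕ → ℝ) : Prop :=
  (∀ k, k + 1 < N → r k ≠ 0) ∧
  (∀ i i' j : Fin N, (i' : ℕ) = (i : ℕ) + 1 → (j : ℕ) ≤ (i : ℕ) → A i' j = r i * A i j) ∧
  (∀ i j : Fin N, (i : ℕ) < (j : ℕ) → A i j = 0)

/-- `A` is a U-CoLT matrix with ratio vector `r'` (0-indexed; `r'` has `N-2` meaningful
nonzero entries): `A (i-1) j = r' (i-1) * A i j` for `i < j`, and `A i j = 0` for `j ≤ i`. -/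
def IsUCoLT {N : ℕ} (A : Matrix (Fin N) (Fin N) ℝ) (r' : ℕ → ℝ) : Prop :=
  (∀ k, k + 2 < N → r' k ≠ 0) ∧
  (∀ i i' j : Fin N, (i : ℕ) = (i' : ℕ) + 1 → (i : ℕ) < (j : ℕ) → A i' j = r' i' * A i j) ∧
  (∀ i j : Fin N, (j : ℕ) ≤ (i : ℕ) → A i j = 0)

/-- The set 𝒞^N: sums of an L-CoLT and a U-CoLT matrix. -/
def InCN {N : ℕ} (M : Matrix (Fin N) (Fin N) ℝ) : Prop :=
  ∃ A B : Matrix (Fin N) (Fin N) ℝ,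
    (∃ r, IsLCoLT A r) ∧ (∃ r', IsUCoLT B r') ∧ M = A + B

/-- The block set 𝒞^{N,M}: an MN×MN block matrix (indexed by Fin M × Fin N, first
component the block index) whose diagonal blocks lie in 𝒞^N and whose blocks satisfy
A_{i+1,j} = diag(r^L_i) A_{i,j} for j ≤ i and A_{i-1,j} = diag(r^U_{i-1}) A_{i,j} for
i ≤ j, with the block ratio vectors r^L, r^U ∈ (ℝ\{0})^{(M-1)N}. -/
def IsBlockCoLT {N M : ℕ} (A : Matrix (Fin M × Fin N) (Fin M × Fin N) ℝ)
    (rL rU : ℕ → Fin N → ℝ) : Prop :=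
  (∀ k : Fin M, InCN ((fun a b => A (k, a) (k, b)) : Matrix (Fin N) (Fin N) ℝ)) ∧
  (∀ k, k + 1 < M → ∀ a, rL k a ≠ 0) ∧
  (∀ k, k + 1 < M → ∀ a, rU k a ≠ 0) ∧
  (∀ i i' j : Fin M, (i' : ℕ) = (i : ℕ) + 1 → (j : ℕ) ≤ (i : ℕ) → ∀ a b : Fin N,
    A (i', a) (j, b) = rL (i : ℕ) a * A (i, a) (j, b)) ∧
  (∀ i i' j : Fin M, (i : ℕ) = (i' : ℕ) + 1 → (i : ℕ) ≤ (j : ℕ) → ∀ a b : Fin N,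
    A (i', a) (j, b) = rU (i' : ℕ) a * A (i, a) (j, b))

section Hadamard

variable {N : ℕ}

theorem IsLCoLT.hadamard {A B : Matrix (Fin N) (Fin N) ℝ} {r s : ℕ → ℝ}
    (hA : IsLCoLT A r) (hB : IsLCoLT B s) :
    IsLCoLT (A ⊙ B) (fun k => r k * s k) := by
  obtain ⟨hr, hA_ratio, hA_zero⟩ := hA
  obtain ⟨hs, hB_ratio, hB_zero⟩ := hB
  refine ⟨fun k hk => mul_ne_zero (hr k hk) (hs k hk), fun i i' j hi hj => ?_,
    fun i j hij => ?_⟩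
  · rw [hadamard_apply, hadamard_apply, hA_ratio i i' j hi hj, hB_ratio i i' j hi hj]
    ring
  · rw [hadamard_apply, hA_zero i j hij, zero_mul]

theorem IsUCoLT.hadamard {A B : Matrix (Fin N) (Fin N) ℝ} {r s : ℕ → ℝ}
    (hA : IsUCoLT A r) (hB : IsUCoLT B s) :
    IsUCoLT (A ⊙ B) (fun k => r k * s k) := by
  obtain ⟨hr, hA_ratio, hA_zero⟩ := hA
  obtain ⟨hs, hB_ratio, hB_zero⟩ := hB
  refine ⟨fun k hk => mul_ne_zero (hr k hk) (hs k hk), fun i i' j hi hj => ?_,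
    fun i j hij => ?_⟩
  · rw [hadamard_apply, hadamard_apply, hA_ratio i i' j hi hj, hB_ratio i i' j hi hj]
    ring
  · rw [hadamard_apply, hA_zero i j hij, zero_mul]

/-- The cross terms vanish because an L-CoLT matrix lives on the lower triangle and a
U-CoLT matrix on the strictly upper one. -/
theorem add_hadamard_add_of_isLCoLT_of_isUCoLT {L L' U U' : Matrix (Fin N) (Fin N) ℝ}
    {r r' s s' : ℕ → ℝ} (hL : IsLCoLT L r) (hL' : IsLCoLT L' r')
    (hU : IsUCoLT U s) (hU' : IsUCoLT U' s') :
    (L + U) ⊙ (L' + U') = L ⊙ L' + U ⊙ U' := by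
  ext i j
  simp only [hadamard_apply, Matrix.add_apply]
  rcases lt_or_ge (i : ℕ) (j : ℕ) with hij | hij
  · rw [hL.2.2 i j hij, hL'.2.2 i j hij]; ring
  · rw [hU.2.2 i j hij, hU'.2.2 i j hij]; ring

theorem InCN.hadamard {P Q : Matrix (Fin N) (Fin N) ℝ} (hP : InCN P) (hQ : InCN Q) :
    InCN (P ⊙ Q) := by
  obtain ⟨L, U, ⟨r, hL⟩, ⟨s, hU⟩, rfl⟩ := hP
  obtain ⟨L', U', ⟨r', hL'⟩, ⟨s', hU'⟩, rfl⟩ := hQ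
  exact ⟨L ⊙ L', U ⊙ U', ⟨_, hL.hadamard hL'⟩, ⟨_, hU.hadamard hU'⟩,
    add_hadamard_add_of_isLCoLT_of_isUCoLT hL hL' hU hU'⟩

end Hadamard

/-- 𝒞^{N,M} is closed under the Hadamard product. -/
theorem stmt14 {N M : ℕ} (A B : Matrix (Fin M × Fin N) (Fin M × Fin N) ℝ)
    (rL rU sL sU : ℕ → Fin N → ℝ)
    (hA : IsBlockCoLT A rL rU) (hB : IsBlockCoLT B sL sU) :
    IsBlockCoLT (Matrix.hadamard A B)
      (fun k a => rL k a * sL k a) (fun k a => rU k a * sU k a) := by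
  obtain ⟨hA_diag, hrL, hrU, hA_down, hA_up⟩ := hA
  obtain ⟨hB_diag, hsL, hsU, hB_down, hB_up⟩ := hB
  refine ⟨fun k => (hA_diag k).hadamard (hB_diag k),
    fun k hk a => mul_ne_zero (hrL k hk a) (hsL k hk a),
    fun k hk a => mul_ne_zero (hrU k hk a) (hsU k hk a),
    fun i i' j hi hj a b => ?_, fun i i' j hi hj a b => ?_⟩
  · rw [hadamard_apply, hadamard_apply, hA_down i i' j hi hj a b, hB_down i i' j hi hj a b]
    ring
  · rw [hadamard_apply, hadamard_apply, hA_up i i' j hi hj a b, hB_up i i' j hi hj a b]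
    ring
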